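/- In the worst-case lower-bound MDP with T : ℝ^{k+2} → ℝ^{k+2} as above, if U ∈ ℝ^{k+2} satisfies U_1 = 0 and U_{k+2} = 0, then (TU - U)_2 + γ⁻¹ (TU - U)_3 + γ⁻² (TU - U)_4 + ⋯ + γ^{-k} (TU - U)_{k+2} = 1, and consequently (∑_{i=0}^k γ^{-i}) max_j |(TU - U)_j| ≥ 1. -/

import Mathlib

/-!
For `0 ≤ m ≤ k` the `(m+2)`-nd coordinate of `TU - U` is `[m = 0] + γ U_{m+1} - U_{m+2}`, so after
weighting by `γ⁻ᵐ` the sum telescopes to `1 + γ (U_1 - γ^{-(k+1)} U_{k+2}) = 1`. Bounding every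
coordinate by the sup norm of `TU - U` turns this identity into the lower bound.
-/

open Finset

theorem Fin.sum_univ_succ_sub_castSucc {M : Type*} [AddCommGroup M] {n : ℕ}
    (f : Fin (n + 2) → M) :
    ∑ i : Fin (n + 1), (f i.succ - f i.castSucc) = f (Fin.last _) - f 0 := by
  have h := Fin.sum_Iic_sub (Fin.last n) f
  rwa [← Fin.top_eq_last, Finset.Iic_top] at h

theorem Fin.sum_inv_pow_mul_mul_castSucc_sub_succ {n : ℕ} {γ : ℝ} (hγ : γ ≠ 0)
    (U : Fin (n + 2) → ℝ) :
    ∑ m : Fin (n + 1), (γ ^ (m : ℕ))⁻¹ * (γ * U m.castSucc - U m.succ) =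
      γ * (U 0 - (γ ^ (n + 1))⁻¹ * U (Fin.last _)) := by
  have hterm : ∀ m : Fin (n + 1), (γ ^ (m : ℕ))⁻¹ * (γ * U m.castSucc - U m.succ) =
      -γ * ((γ ^ (m.succ : ℕ))⁻¹ * U m.succ - (γ ^ (m.castSucc : ℕ))⁻¹ * U m.castSucc) := by
    intro m
    simp only [Fin.val_succ, Fin.val_castSucc, pow_succ, mul_inv]
    field_simp
    ring
  rw [Finset.sum_congr rfl fun m _ => hterm m, ← Finset.mul_sum,
    Fin.sum_univ_succ_sub_castSucc (fun i => (γ ^ (i : ℕ))⁻¹ * U i)]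
  simp only [Fin.val_last, Fin.val_zero, pow_zero, inv_one, one_mul]
  ring

theorem sum_mul_apply_le_sum_mul_norm {ι κ : Type*} [Fintype κ] (s : Finset ι) {c : ι → ℝ}
    (hc : ∀ i ∈ s, 0 ≤ c i) (x : κ → ℝ) (e : ι → κ) :
    ∑ i ∈ s, c i * x (e i) ≤ (∑ i ∈ s, c i) * ‖x‖ := by
  rw [Finset.sum_mul]
  refine Finset.sum_le_sum fun i hi => mul_le_mul_of_nonneg_left ?_ (hc i hi)
  calc x (e i) ≤ ‖x (e i)‖ := Real.le_norm_self _
    _ ≤ ‖x‖ := norm_le_pi_norm x (e i)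

theorem stmt_14_general (k : ℕ) (γ : ℝ) (hγ0 : 0 < γ)
    (T : (Fin (k+2) → ℝ) → (Fin (k+2) → ℝ))
    (hT : ∀ (U : Fin (k+2) → ℝ) (j : Fin (k+2)),
      T U j = if j.1 = 0 then γ * U 0
              else if j.1 = 1 then 1 + γ * U 0
              else γ * U ⟨j.1 - 1, lt_of_le_of_lt (Nat.sub_le _ _) j.isLt⟩)
    (U : Fin (k+2) → ℝ)
    (h1 : U 0 = 0) (h2 : U ⟨k+1, Nat.lt_succ_self _⟩ = 0) :
    (∑ m : Fin (k+1), (γ^(m:ℕ))⁻¹ * ((T U - U) m.succ)) = 1 ∧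
    1 ≤ (∑ i ∈ Finset.range (k+1), (γ^i)⁻¹) * ‖T U - U‖ := by
  have hstep : ∀ m : Fin (k + 1),
      (T U - U) m.succ = (if m = 0 then 1 else 0) + (γ * U m.castSucc - U m.succ) := by
    intro m
    rw [Pi.sub_apply, hT]
    rcases Fin.eq_zero_or_eq_succ m with rfl | ⟨i, rfl⟩
    · rw [if_neg (by simp), if_pos rfl]
      exact add_sub_assoc _ _ _
    · rw [if_neg (by simp), if_neg (by simp), if_neg (Fin.succ_ne_zero i), zero_add]
      rfl
  have hlast : U (Fin.last (k + 1)) = 0 := h2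
  have hsum : ∑ m : Fin (k+1), (γ^(m:ℕ))⁻¹ * ((T U - U) m.succ) = 1 := by
    simp only [hstep, mul_add, Finset.sum_add_distrib,
      Fin.sum_inv_pow_mul_mul_castSucc_sub_succ hγ0.ne', mul_ite, mul_one, mul_zero,
      Finset.sum_ite_eq', Finset.mem_univ, if_true, Fin.val_zero, pow_zero, inv_one, h1, hlast,
      sub_zero, add_zero]
  refine ⟨hsum, ?_⟩
  calc (1 : ℝ) = ∑ m : Fin (k+1), (γ^(m:ℕ))⁻¹ * ((T U - U) m.succ) := hsum.symm
    _ ≤ (∑ m : Fin (k+1), (γ^(m:ℕ))⁻¹) * ‖T U - U‖ :=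
      sum_mul_apply_le_sum_mul_norm _ (fun m _ => by positivity) _ _
    _ = _ := by rw [Fin.sum_univ_eq_sum_range (fun i => (γ ^ i)⁻¹)]

theorem stmt_14 (k : ℕ) (γ : ℝ) (hγ0 : 0 < γ) (hγ1 : γ ≤ 1)
    (T : (Fin (k+2) → ℝ) → (Fin (k+2) → ℝ))
    (hT : ∀ (U : Fin (k+2) → ℝ) (j : Fin (k+2)),
      T U j = if j.1 = 0 then γ * U 0
              else if j.1 = 1 then 1 + γ * U 0
              else γ * U ⟨j.1 - 1, lt_of_le_of_lt (Nat.sub_le _ _) j.isLt⟩)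
    (U : Fin (k+2) → ℝ)
    (h1 : U 0 = 0) (h2 : U ⟨k+1, Nat.lt_succ_self _⟩ = 0) :
    (∑ m : Fin (k+1), (γ^(m:ℕ))⁻¹ * ((T U - U) m.succ)) = 1 ∧
    1 ≤ (∑ i ∈ Finset.range (k+1), (γ^i)⁻¹) * ‖T U - U‖ :=
  stmt_14_general k γ hγ0 T hT U h1 h2
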